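/- For every constant-free nested regular expression e built from the axes self, next, edge, node and their inverses using composition, union, Kleene star and nesting, if (a,b) ∈ ⟦e⟧_G for some p-RDF graph G with a,b constants of G, then there exists a strongly acyclic p-RDF graph H such that (a,b) ∈ ⟦e⟧_H. -/

import Mathlib

/-!
Constant-free nested regular expressions are preserved by every map `h : U → U` sending triples
of `G` to triples of `H`. When `a`, `b`, `p` are distinct, the retraction that fixes them and sends
every other constant to `a` maps `G` into the complete `p`-graph on `{a, b}`. There `(a, b)`
survives the deletion of one of the two crossing triples `(a,p,b)`, `(b,p,a)`: every other pair
of constants is already realised inside a loop `(a,p,a)` or `(b,p,b)` (collapse once more), and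
by induction on `e` a single crossing triple suffices for `(a, b)`. What remains,
`{(a,p,a), (a,p,b), (b,p,b)}` or its mirror image, has a path as induced graph. When `a`, `b`,
`p` are not distinct, a single loop `(c,p,c)` suffices.
-/

/-- Navigation axes for nested regular expressions. -/
inductive Axis where
  | self | next | edge | node | nextInv | edgeInv | nodeInv
deriving DecidableEq

/-- Nested regular expressions over a universe `U` of constants. -/
inductive NRE (U : Type) where
  | axis : Axis → NRE U
  | axisC : Axis → U → NRE U
  | nest : Axis → NRE U → NRE U
  | comp : NRE U → NRE U → NRE U
  | union : NRE U → NRE U → NRE U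
  | star : NRE U → NRE U

variable {U : Type}

/-- Active domain of an RDF graph. -/
def adom (G : Set (U × U × U)) : Set U :=
  {c | ∃ t ∈ G, c = t.1 ∨ c = t.2.1 ∨ c = t.2.2}

/-- Relational composition. -/
def rcomp (R S : Set (U × U)) : Set (U × U) :=
  {p | ∃ c, (p.1, c) ∈ R ∧ (c, p.2) ∈ S}

/-- Evaluation of a bare axis on an RDF graph. -/
def axisFwd (G : Set (U × U × U)) : Axis → Set (U × U)
  | .self => {p | p.1 = p.2 ∧ p.1 ∈ adom G}
  | .next => {p | ∃ c, (p.1, c, p.2) ∈ G}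
  | .edge => {p | ∃ c, (p.1, p.2, c) ∈ G}
  | .node => {p | ∃ c, (c, p.1, p.2) ∈ G}
  | .nextInv => {p | ∃ c, (p.2, c, p.1) ∈ G}
  | .edgeInv => {p | ∃ c, (p.2, p.1, c) ∈ G}
  | .nodeInv => {p | ∃ c, (c, p.2, p.1) ∈ G}

/-- Evaluation of `axis::c` on an RDF graph. -/
def axisCEval (G : Set (U × U × U)) : Axis → U → Set (U × U)
  | .self, c => {p | p.1 = p.2 ∧ p.1 = c ∧ c ∈ adom G}
  | .next, c => {p | (p.1, c, p.2) ∈ G}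
  | .edge, c => {p | (p.1, p.2, c) ∈ G}
  | .node, c => {p | (c, p.1, p.2) ∈ G}
  | .nextInv, c => {p | (p.2, c, p.1) ∈ G}
  | .edgeInv, c => {p | (p.2, p.1, c) ∈ G}
  | .nodeInv, c => {p | (c, p.2, p.1) ∈ G}

/-- Evaluation of a nested regular expression on an RDF graph. -/
def NRE.eval (G : Set (U × U × U)) : NRE U → Set (U × U)
  | .axis a => axisFwd G a
  | .axisC a c => axisCEval G a c
  | .nest .self e => {p | p.1 = p.2 ∧ ∃ c, (p.1, c) ∈ e.eval G}
  | .nest a e => {p | ∃ c d, p ∈ axisCEval G a c ∧ (c, d) ∈ e.eval G}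
  | .comp e1 e2 => rcomp (e1.eval G) (e2.eval G)
  | .union e1 e2 => e1.eval G ∪ e2.eval G
  | .star e => {p | p.1 = p.2 ∧ p.1 ∈ adom G} ∪
      {p | Relation.TransGen (fun a b => (a, b) ∈ e.eval G) p.1 p.2}
/-- A p-RDF graph: all predicates equal p, and p occurs neither as subject nor object. -/
def IsPGraph (p : U) (G : Set (U × U × U)) : Prop :=
  (∀ t ∈ G, t.2.1 = p) ∧ ∀ t ∈ G, t.1 ≠ p ∧ t.2.2 ≠ p

/-- The induced graph of a p-RDF graph: an undirected bipartite graph with a node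
(inl a) for each constant a, a node (inr (a,b)) for each triple (a,p,b), and
edges {v_a, u_ab}, {u_ab, v_b}. -/
def indGraph (p : U) (G : Set (U × U × U)) : SimpleGraph (U ⊕ (U × U)) where
  Adj v w := ∃ a q, ((v = Sum.inl a ∧ w = Sum.inr q) ∨ (v = Sum.inr q ∧ w = Sum.inl a)) ∧
      (q.1, p, q.2) ∈ G ∧ (a = q.1 ∨ a = q.2)
  symm := by
    constructor
    rintro v w ⟨a, q, h1, h2, h3⟩
    exact ⟨a, q, h1.symm.imp And.symm And.symm, h2, h3⟩
  loopless := by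
    constructor
    rintro v ⟨a, q, (⟨h, h'⟩ | ⟨h, h'⟩), -, -⟩ <;> subst h <;> simp at h'

/-- A p-RDF graph is strongly acyclic if its induced graph is acyclic. -/
def StronglyAcyclic (p : U) (G : Set (U × U × U)) : Prop :=
  (indGraph p G).IsAcyclic

/-- Constant-free nested regular expressions (no subexpression of the form axis::c). -/
def NRE.constFree : NRE U → Prop
  | .axis _ => True
  | .axisC _ _ => False
  | .nest _ e => e.constFree
  | .comp e1 e2 => e1.constFree ∧ e2.constFree
  | .union e1 e2 => e1.constFree ∧ e2.constFree
  | .star e => e.constFree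

theorem SimpleGraph.isAcyclic_of_parent_rank {V : Type*} {G : SimpleGraph V} (f : V → V)
    (m : V → ℕ) (h : ∀ ⦃v w⦄, G.Adj v w → w = f v ∧ m w < m v ∨ v = f w ∧ m v < m w) :
    G.IsAcyclic := by
  classical
  intro v c hc
  -- both cycle-neighbours of a vertex of maximal rank would have to be its parent
  obtain ⟨x, hx, hmax⟩ := c.support.toFinset.exists_max_image m ⟨v, by simp⟩
  rw [List.mem_toFinset] at hx
  set c' := c.rotate x hx
  have hc' : c'.IsCycle := hc.rotate hx
  have parent : ∀ y, G.Adj x y → y ∈ c'.support → y = f x := fun y hxy hy =>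
    ((h hxy).resolve_right fun h' =>
      (hmax y (List.mem_toFinset.2 ((c.mem_support_rotate_iff x hx).1 hy))).not_gt h'.2).1
  exact hc'.snd_ne_penultimate <|
    (parent _ (c'.adj_snd hc'.not_nil) (c'.getVert_mem_support _)).trans
      (parent _ (c'.adj_penultimate hc'.not_nil).symm (c'.getVert_mem_support _)).symm

theorem Relation.TransGen.restrict_ne_target {α : Type*} {r : α → α → Prop} {x y : α}
    (h : TransGen r x y) (hxy : x ≠ y) : TransGen (fun u v => r u v ∧ u ≠ y) x y := by
  induction h using Relation.TransGen.head_induction_on with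
  | single hr => exact .single ⟨hr, hxy⟩
  | @head x c hr _ ih =>
    by_cases hcy : c = y
    · exact .single ⟨hcy ▸ hr, hxy⟩
    · exact .head ⟨hr, hxy⟩ (ih hcy)

theorem IsPGraph.mono {p : U} {G H : Set (U × U × U)} (hG : IsPGraph p G) (hHG : H ⊆ G) :
    IsPGraph p H :=
  ⟨fun t ht => hG.1 t (hHG ht), fun t ht => hG.2 t (hHG ht)⟩

section Homomorphism

variable {G H : Set (U × U × U)}

theorem mem_adom_of_mem {x y z : U} (h : (x, y, z) ∈ G) :
    x ∈ adom G ∧ y ∈ adom G ∧ z ∈ adom G :=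
  ⟨⟨_, h, .inl rfl⟩, ⟨_, h, .inr (.inl rfl)⟩, ⟨_, h, .inr (.inr rfl)⟩⟩

theorem mem_adom_of_mem_axisFwd {ax : Axis} {x y : U} (h : (x, y) ∈ axisFwd G ax) :
    x ∈ adom G ∧ y ∈ adom G := by
  cases ax
  case self => obtain ⟨(rfl : x = y), hx⟩ := h; exact ⟨hx, hx⟩
  all_goals obtain ⟨c, hc⟩ := h; have := mem_adom_of_mem hc; tauto

theorem axisCEval_subset_axisFwd (ax : Axis) (c : U) : axisCEval G ax c ⊆ axisFwd G ax := by
  cases ax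
  case self => rintro ⟨x, y⟩ ⟨(rfl : x = y), (rfl : x = c), hx⟩; exact ⟨rfl, hx⟩
  all_goals exact fun _ h => ⟨c, h⟩

theorem mem_axisFwd_iff_exists_axisCEval {ax : Axis} (hax : ax ≠ .self) {q : U × U} :
    q ∈ axisFwd G ax ↔ ∃ c, q ∈ axisCEval G ax c := by
  cases ax <;> first | exact absurd rfl hax | rfl

theorem NRE.eval_nest {ax : Axis} (hax : ax ≠ .self) (e : NRE U) :
    (NRE.nest ax e).eval G = {q | ∃ c d, q ∈ axisCEval G ax c ∧ (c, d) ∈ e.eval G} := by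
  cases ax <;> first | exact absurd rfl hax | rfl

theorem NRE.mem_adom_of_mem_eval {e : NRE U} {x y : U} (h : (x, y) ∈ e.eval G) :
    x ∈ adom G ∧ y ∈ adom G := by
  induction e generalizing x y with
  | axis ax => exact mem_adom_of_mem_axisFwd h
  | axisC ax c => exact mem_adom_of_mem_axisFwd (axisCEval_subset_axisFwd ax c h)
  | nest ax e ih =>
    by_cases hax : ax = .self
    · subst hax
      obtain ⟨(rfl : x = y), c, hc⟩ := h
      exact ⟨(ih hc).1, (ih hc).1⟩
    · rw [NRE.eval_nest hax] at h
      obtain ⟨c, d, h, -⟩ := h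
      exact mem_adom_of_mem_axisFwd (axisCEval_subset_axisFwd ax c h)
  | comp e₁ e₂ ih₁ ih₂ => obtain ⟨c, h₁, h₂⟩ := h; exact ⟨(ih₁ h₁).1, (ih₂ h₂).2⟩
  | union e₁ e₂ ih₁ ih₂ => exact h.elim ih₁ ih₂
  | star e ih =>
    rcases h with ⟨(rfl : x = y), hx⟩ | h
    · exact ⟨hx, hx⟩
    · replace h : Relation.TransGen (fun u v => (u, v) ∈ e.eval G) x y := h
      induction h with
      | single h => exact ih h
      | tail _ h ih' => exact ⟨ih'.1, (ih h).2⟩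

variable {h : U → U} (hh : ∀ x y z, (x, y, z) ∈ G → (h x, h y, h z) ∈ H)
include hh

theorem map_mem_adom {x : U} (hx : x ∈ adom G) : h x ∈ adom H := by
  obtain ⟨⟨s, t, u⟩, hG, rfl | rfl | rfl⟩ := hx
  all_goals have := mem_adom_of_mem (hh _ _ _ hG); tauto

theorem map_mem_axisFwd {ax : Axis} {x y : U} (hxy : (x, y) ∈ axisFwd G ax) :
    (h x, h y) ∈ axisFwd H ax := by
  cases ax
  case self => obtain ⟨(rfl : x = y), hx⟩ := hxy; exact ⟨rfl, map_mem_adom hh hx⟩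
  all_goals obtain ⟨c, hc⟩ := hxy; exact ⟨h c, hh _ _ _ hc⟩

theorem map_mem_axisCEval {ax : Axis} {c x y : U} (hxy : (x, y) ∈ axisCEval G ax c) :
    (h x, h y) ∈ axisCEval H ax (h c) := by
  cases ax
  case self =>
    obtain ⟨(rfl : x = y), (rfl : x = c), hx⟩ := hxy
    exact ⟨rfl, rfl, map_mem_adom hh hx⟩
  all_goals exact hh _ _ _ hxy

theorem NRE.map_mem_eval {e : NRE U} (hcf : e.constFree) {x y : U} (hxy : (x, y) ∈ e.eval G) :
    (h x, h y) ∈ e.eval H := by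
  induction e generalizing x y with
  | axis ax => exact map_mem_axisFwd hh hxy
  | axisC => exact hcf.elim
  | nest ax e ih =>
    by_cases hax : ax = .self
    · subst hax
      obtain ⟨(rfl : x = y), c, hc⟩ := hxy
      exact ⟨rfl, h c, ih hcf hc⟩
    · rw [NRE.eval_nest hax] at hxy ⊢
      obtain ⟨c, d, hxy, hcd⟩ := hxy
      exact ⟨h c, h d, map_mem_axisCEval hh hxy, ih hcf hcd⟩
  | comp e₁ e₂ ih₁ ih₂ => obtain ⟨c, h₁, h₂⟩ := hxy; exact ⟨h c, ih₁ hcf.1 h₁, ih₂ hcf.2 h₂⟩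
  | union e₁ e₂ ih₁ ih₂ => exact hxy.imp (ih₁ hcf.1) (ih₂ hcf.2)
  | star e ih =>
    rcases hxy with ⟨(rfl : x = y), hx⟩ | hxy
    · exact .inl ⟨rfl, map_mem_adom hh hx⟩
    · exact .inr (hxy.lift h fun u v => ih hcf)

end Homomorphism

section TwoConstants

variable {a b p : U}

def completePGraph (a b p : U) : Set (U × U × U) := {(a, p, a), (a, p, b), (b, p, a), (b, p, b)}

def orientedPGraph (a b p : U) : Set (U × U × U) := {(a, p, a), (a, p, b), (b, p, b)}

theorem finite_orientedPGraph : (orientedPGraph a b p).Finite :=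
  ((Set.finite_singleton _).insert _).insert _

theorem mem_completePGraph {x y z : U} :
    (x, y, z) ∈ completePGraph a b p ↔ (x = a ∨ x = b) ∧ y = p ∧ (z = a ∨ z = b) := by
  simp only [completePGraph, Set.mem_insert_iff, Set.mem_singleton_iff, Prod.mk.injEq]
  tauto

theorem isPGraph_completePGraph (hap : a ≠ p) (hbp : b ≠ p) :
    IsPGraph p (completePGraph a b p) := by
  refine ⟨fun ⟨x, y, z⟩ h => (mem_completePGraph.1 h).2.1, fun ⟨x, y, z⟩ h => ?_⟩
  obtain ⟨hx, -, hz⟩ := mem_completePGraph.1 h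
  dsimp only
  constructor <;> rintro rfl <;> tauto

theorem orientedPGraph_subset_completePGraph : orientedPGraph a b p ⊆ completePGraph a b p := by
  intro t ht
  rcases ht with rfl | rfl | rfl <;> simp [completePGraph]

theorem completePGraph_self_subset_orientedPGraph_left :
    completePGraph a a p ⊆ orientedPGraph a b p := by
  intro t ht
  rcases ht with rfl | rfl | rfl | rfl <;> simp [orientedPGraph]

theorem completePGraph_self_subset_orientedPGraph_right :
    completePGraph b b p ⊆ orientedPGraph a b p := by
  intro t ht
  rcases ht with rfl | rfl | rfl | rfl <;> simp [orientedPGraph]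

theorem stronglyAcyclic_orientedPGraph : StronglyAcyclic p (orientedPGraph a b p) := by
  classical
  -- the induced graph is the path `u_aa - v_a - u_ab - v_b - u_bb` rooted at `v_a`
  apply SimpleGraph.isAcyclic_of_parent_rank
    (Sum.elim (fun x => if x = b then .inr (a, b) else .inl x)
      (fun q => if q = (b, b) then .inl b else .inl a))
    (Sum.elim (fun x => if x = b then 2 else 0) (fun q => if q = (b, b) then 3 else 1))
  rintro v w ⟨x, ⟨q₁, q₂⟩, (⟨rfl, rfl⟩ | ⟨rfl, rfl⟩), hq, hx⟩ <;>
  · rcases hq with h | h | h <;> simp only [Set.mem_singleton_iff, Prod.mk.injEq] at h <;>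
      obtain ⟨rfl, -, rfl⟩ := h <;> rcases hx with rfl | rfl <;>
      simp only [Sum.elim_inl, Sum.elim_inr, Prod.mk.injEq] <;> split_ifs <;> simp_all

theorem isPGraph_orientedPGraph (hap : a ≠ p) (hbp : b ≠ p) : IsPGraph p (orientedPGraph a b p) :=
  (isPGraph_completePGraph hap hbp).mono orientedPGraph_subset_completePGraph

theorem eq_or_eq_or_eq_of_mem_adom_completePGraph {x : U} (hx : x ∈ adom (completePGraph a b p)) :
    x = a ∨ x = b ∨ x = p := by
  obtain ⟨⟨s, t, u⟩, h, hx⟩ := hx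
  have := mem_completePGraph.1 h
  rcases hx with rfl | rfl | rfl <;> tauto

theorem NRE.mem_eval_of_completePGraph_subset {G H : Set (U × U × U)} (hpG : IsPGraph p G)
    (hap : a ≠ p) (hbp : b ≠ p) (hH : completePGraph a b p ⊆ H) {e : NRE U} (hcf : e.constFree)
    {x y : U} (hxy : (x, y) ∈ e.eval G) (hx : x = a ∨ x = b ∨ x = p) (hy : y = a ∨ y = b ∨ y = p) :
    (x, y) ∈ e.eval H := by
  classical
  let h : U → U := fun z => if z = p then p else if z = b then b else a
  have fix : ∀ z, z = a ∨ z = b ∨ z = p → h z = z := by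
    rintro z (rfl | rfl | rfl) <;> simp only [h] <;> split_ifs <;> simp_all
  have onto : ∀ z, z ≠ p → h z = a ∨ h z = b := by
    intro z hz
    simp only [h, if_neg hz]
    split_ifs <;> simp
  have hom : ∀ s t u, (s, t, u) ∈ G → (h s, h t, h u) ∈ H := by
    intro s t u hG
    obtain ⟨hs, hu⟩ := hpG.2 _ hG
    have ht : t = p := hpG.1 _ hG
    exact hH (mem_completePGraph.2 ⟨onto s hs, by simp [h, ht], onto u hu⟩)
  simpa only [fix x hx, fix y hy] using NRE.map_mem_eval hom hcf hxy

theorem NRE.mem_eval_of_loops_subset (hap : a ≠ p) (hbp : b ≠ p) {e : NRE U} (hcf : e.constFree)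
    {x y : U} (hxy : (x, y) ∈ e.eval (completePGraph a b p)) (hab : ¬(x = a ∧ y = b))
    (hba : ¬(x = b ∧ y = a)) {H : Set (U × U × U)} (haH : completePGraph a a p ⊆ H)
    (hbH : completePGraph b b p ⊆ H) : (x, y) ∈ e.eval H := by
  have hpG := isPGraph_completePGraph hap hbp
  obtain ⟨hx, hy⟩ := NRE.mem_adom_of_mem_eval hxy
  have hx := eq_or_eq_or_eq_of_mem_adom_completePGraph hx
  have hy := eq_or_eq_or_eq_of_mem_adom_completePGraph hy
  by_cases hxb : x = b ∨ y = b
  · exact NRE.mem_eval_of_completePGraph_subset hpG hbp hbp hbH hcf hxy (by tauto) (by tauto)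
  · exact NRE.mem_eval_of_completePGraph_subset hpG hap hap haH hcf hxy (by tauto) (by tauto)

theorem mem_axisCEval_orientedPGraph (hab : a ≠ b) (hap : a ≠ p) (hbp : b ≠ p) {ax : Axis}
    {c : U} (h : (a, b) ∈ axisCEval (completePGraph a b p) ax c) :
    c = p ∧ ((a, b) ∈ axisCEval (orientedPGraph a b p) ax c ∨
      (a, b) ∈ axisCEval (orientedPGraph b a p) ax c) := by
  cases ax <;> simp [axisCEval, completePGraph, orientedPGraph, hab, hab.symm, hap, hbp] at h ⊢ <;>
    exact h

theorem NRE.mem_eval_orientedPGraph_both (hap : a ≠ p) (hbp : b ≠ p) {e : NRE U}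
    (hcf : e.constFree) {x y : U} (hxy : (x, y) ∈ e.eval (completePGraph a b p))
    (hab : ¬(x = a ∧ y = b)) (hba : ¬(x = b ∧ y = a)) :
    (x, y) ∈ e.eval (orientedPGraph a b p) ∧ (x, y) ∈ e.eval (orientedPGraph b a p) :=
  ⟨mem_eval_of_loops_subset hap hbp hcf hxy hab hba
      completePGraph_self_subset_orientedPGraph_left
      completePGraph_self_subset_orientedPGraph_right,
    mem_eval_of_loops_subset hap hbp hcf hxy hab hba
      completePGraph_self_subset_orientedPGraph_right
      completePGraph_self_subset_orientedPGraph_left⟩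

theorem NRE.transGen_eval_of_loops_subset (hab : a ≠ b) (hap : a ≠ p) (hbp : b ≠ p)
    {e : NRE U} (hcf : e.constFree) {H : Set (U × U × U)} (haH : completePGraph a a p ⊆ H)
    (hbH : completePGraph b b p ⊆ H)
    (hH : (a, b) ∈ e.eval (completePGraph a b p) → (a, b) ∈ e.eval H)
    (h : Relation.TransGen (fun u v => (u, v) ∈ e.eval (completePGraph a b p)) a b) :
    Relation.TransGen (fun u v => (u, v) ∈ e.eval H) a b := by
  -- cut the chain at its first arrival at `b`; then only a step `(a, b)` can cross
  refine Relation.TransGen.mono (fun u v ⟨huv, hub⟩ => ?_) a b (h.restrict_ne_target hab)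
  by_cases hu : u = a ∧ v = b
  · obtain ⟨rfl, rfl⟩ := hu
    exact hH huv
  · exact mem_eval_of_loops_subset hap hbp hcf huv hu (hub ∘ And.left) haH hbH

theorem NRE.mem_eval_orientedPGraph_or (hab : a ≠ b) (hap : a ≠ p) (hbp : b ≠ p) {e : NRE U}
    (hcf : e.constFree) (h : (a, b) ∈ e.eval (completePGraph a b p)) :
    (a, b) ∈ e.eval (orientedPGraph a b p) ∨ (a, b) ∈ e.eval (orientedPGraph b a p) := by
  induction e with
  | axis ax =>
    by_cases hax : ax = .self
    · subst hax
      exact absurd h.1 hab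
    simp only [eval, mem_axisFwd_iff_exists_axisCEval hax] at h ⊢
    obtain ⟨c, hc⟩ := h
    exact (mem_axisCEval_orientedPGraph hab hap hbp hc).2.imp (⟨c, ·⟩) (⟨c, ·⟩)
  | axisC => exact hcf.elim
  | nest ax e =>
    by_cases hax : ax = .self
    · subst hax
      exact absurd h.1 hab
    simp only [eval_nest hax] at h ⊢
    obtain ⟨c, d, hc, hcd⟩ := h
    obtain ⟨rfl, hc⟩ := mem_axisCEval_orientedPGraph hab hap hbp hc
    have hd := mem_eval_orientedPGraph_both (e := e) hap hbp hcf hcd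
      (fun h => hap h.1.symm) (fun h => hbp h.1.symm)
    exact hc.imp (fun h => ⟨c, d, h, hd.1⟩) (fun h => ⟨c, d, h, hd.2⟩)
  | comp e₁ e₂ ih₁ ih₂ =>
    obtain ⟨c, h₁, h₂⟩ := h
    rcases eq_or_eq_or_eq_of_mem_adom_completePGraph (mem_adom_of_mem_eval h₁).2
      with hc | hc | hc <;> rw [hc] at h₁ h₂
    · have h₁ := mem_eval_orientedPGraph_both hap hbp hcf.1 h₁ (fun h => hab h.2) (fun h => hab h.1)
      exact (ih₂ hcf.2 h₂).imp (⟨a, h₁.1, ·⟩) (⟨a, h₁.2, ·⟩)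
    · have h₂ := mem_eval_orientedPGraph_both hap hbp hcf.2 h₂
        (fun h => hab h.1.symm) (fun h => hab h.2.symm)
      exact (ih₁ hcf.1 h₁).imp (⟨b, ·, h₂.1⟩) (⟨b, ·, h₂.2⟩)
    · have h₁ := mem_eval_orientedPGraph_both hap hbp hcf.1 h₁
        (fun h => hbp h.2.symm) (fun h => hab h.1)
      have h₂ := mem_eval_orientedPGraph_both hap hbp hcf.2 h₂
        (fun h => hap h.1.symm) (fun h => hbp h.1.symm)
      exact .inl ⟨p, h₁.1, h₂.1⟩
  | union e₁ e₂ ih₁ ih₂ =>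
    rcases h with h | h
    · exact (ih₁ hcf.1 h).imp .inl .inl
    · exact (ih₂ hcf.2 h).imp .inr .inr
  | star e ih =>
    rcases h with ⟨hab', -⟩ | h
    · exact absurd hab' hab
    exact (imp_or.1 (ih hcf)).imp
      (fun hH => .inr (transGen_eval_of_loops_subset (e := e) hab hap hbp hcf
        completePGraph_self_subset_orientedPGraph_left
        completePGraph_self_subset_orientedPGraph_right hH h))
      (fun hH => .inr (transGen_eval_of_loops_subset (e := e) hab hap hbp hcf
        completePGraph_self_subset_orientedPGraph_right
        completePGraph_self_subset_orientedPGraph_left hH h))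

theorem exists_stronglyAcyclic_of_mem_eval_orientedPGraph (hap : a ≠ p) (hbp : b ≠ p)
    {e : NRE U} {x y : U} (h : (x, y) ∈ e.eval (orientedPGraph a b p)) :
    ∃ H : Set (U × U × U), H.Finite ∧ IsPGraph p H ∧ StronglyAcyclic p H ∧ (x, y) ∈ e.eval H :=
  ⟨_, finite_orientedPGraph, isPGraph_orientedPGraph hap hbp, stronglyAcyclic_orientedPGraph, h⟩

end TwoConstants

theorem constFree_nre_strongly_acyclic_witness_general {U : Type} (e : NRE U)
    (hcf : e.constFree) (p : U) (G : Set (U × U × U))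
    (hpG : IsPGraph p G) (a b : U)
    (hab : (a, b) ∈ NRE.eval G e) :
    ∃ H : Set (U × U × U), H.Finite ∧ IsPGraph p H ∧ StronglyAcyclic p H ∧
      (a, b) ∈ NRE.eval H e := by
  by_cases hgen : a ≠ b ∧ a ≠ p ∧ b ≠ p
  · obtain ⟨hab', hap, hbp⟩ := hgen
    have hF := NRE.mem_eval_of_completePGraph_subset hpG hap hbp subset_rfl hcf hab
      (.inl rfl) (.inr (.inl rfl))
    rcases NRE.mem_eval_orientedPGraph_or hab' hap hbp hcf hF with h | h
    · exact exists_stronglyAcyclic_of_mem_eval_orientedPGraph hap hbp h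
    · exact exists_stronglyAcyclic_of_mem_eval_orientedPGraph hbp hap h
  · obtain ⟨c, hcp, hac, hbc⟩ : ∃ c, c ≠ p ∧ (a = c ∨ a = p) ∧ (b = c ∨ b = p) := by
      by_cases hap : a = p
      · by_cases hbp : b = p
        · obtain ⟨t, ht, -⟩ := (NRE.mem_adom_of_mem_eval hab).1
          exact ⟨t.1, (hpG.2 t ht).1, .inr hap, .inr hbp⟩
        · exact ⟨b, hbp, .inr hap, .inl rfl⟩
      · exact ⟨a, hap, .inl rfl, by tauto⟩
    exact exists_stronglyAcyclic_of_mem_eval_orientedPGraph hcp hcp <|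
      NRE.mem_eval_of_completePGraph_subset hpG hcp hcp
        completePGraph_self_subset_orientedPGraph_left hcf hab (by tauto) (by tauto)

/-- For every constant-free nre e, if (a,b) ∈ ⟦e⟧_G for some p-RDF
graph G with a, b constants of G, then there is a strongly acyclic p-RDF graph H
with (a,b) ∈ ⟦e⟧_H. -/
theorem constFree_nre_strongly_acyclic_witness {U : Type} (e : NRE U)
    (hcf : e.constFree) (p : U) (G : Set (U × U × U)) (hfin : G.Finite)
    (hpG : IsPGraph p G) (a b : U) (ha : a ∈ adom G) (hb : b ∈ adom G)
    (hab : (a, b) ∈ NRE.eval G e) :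
    ∃ H : Set (U × U × U), H.Finite ∧ IsPGraph p H ∧ StronglyAcyclic p H ∧
      (a, b) ∈ NRE.eval H e :=
  constFree_nre_strongly_acyclic_witness_general e hcf p G hpG a b hab
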